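/- Let F : (-π, π) → ℝ be the function F(x) = 1 + 1/cos(x/2) - 2·cos(x/2). Then for every natural number k, the k-th iterated derivative of F at 0 is nonnegative: F^{(k)}(0) ≥ 0. Moreover F(0) = 0 and F'(0) = 0 and F''(0) > 0. -/

import Mathlib

/-!
Since `sec' = sec · tan` and `tan' = 1 + tan²`, the derivatives of `sec` are
`sec⁽ⁿ⁾ = sec · Pₙ(tan)` with `Pₙ₊₁ = (1 + X²) Pₙ' + X Pₙ`, so every `Pₙ` has nonnegative
coefficients and `sec⁽ⁿ⁾(0) = Pₙ(0) ≥ 0`; moreover `Pₙ₊₂(0) = Pₙ(0) + 2 [X²]Pₙ ≥ Pₙ(0)`, whence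
`sec⁽⁴ᵐ⁾(0) ≥ sec⁽⁴⁾(0) = 5` for `m ≥ 1`. Writing `F(x) = G(x/2)` with `G = 1 + sec - 2 cos`, we get
`F⁽ⁿ⁾(0) = 2⁻ⁿ (Pₙ(0) - 2 cos⁽ⁿ⁾(0))` for `n ≥ 1`, and `cos⁽ⁿ⁾(0) ∈ {0, -1, 1}` is `1` only when
`4 ∣ n`.
-/

open Real

noncomputable def F (x : ℝ) : ℝ := 1 + 1 / Real.cos (x / 2) - 2 * Real.cos (x / 2)

open Polynomial Set Topology

theorem Polynomial.coeff_mul_nonneg {R : Type*} [Semiring R] [PartialOrder R] [IsOrderedRing R]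
    {p q : R[X]} (hp : ∀ i, 0 ≤ p.coeff i) (hq : ∀ i, 0 ≤ q.coeff i) (i : ℕ) :
    0 ≤ (p * q).coeff i := by
  rw [coeff_mul]
  exact Finset.sum_nonneg fun _ _ => mul_nonneg (hp _) (hq _)

theorem Polynomial.coeff_derivative_nonneg {R : Type*} [Semiring R] [PartialOrder R]
    [IsOrderedRing R] {p : R[X]} (hp : ∀ i, 0 ≤ p.coeff i) (i : ℕ) :
    0 ≤ (derivative p).coeff i := by
  rw [coeff_derivative]
  exact mul_nonneg (hp _) (add_nonneg i.cast_nonneg zero_le_one)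

theorem iteratedDeriv_comp_const_mul_of_contDiffOn {𝕜 : Type*} [NontriviallyNormedField 𝕜]
    {n : ℕ} {f : 𝕜 → 𝕜} {s : Set 𝕜} (hs : IsOpen s) (hf : ContDiffOn 𝕜 n f s) {c : 𝕜}
    (hcs : MapsTo (c * ·) s s) {x : 𝕜} (hx : x ∈ s) :
    iteratedDeriv n (fun y => f (c * y)) x = c ^ n * iteratedDeriv n f (c * x) := by
  rw [← iteratedDerivWithin_of_isOpen hs hx, ← iteratedDerivWithin_of_isOpen hs (hcs hx)]
  exact iteratedDerivWithin_comp_const_smul hx hs.uniqueDiffOn hf c hcs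

noncomputable def secPoly : ℕ → ℝ[X]
  | 0 => 1
  | n + 1 => (1 + X ^ 2) * derivative (secPoly n) + X * secPoly n

theorem secPoly_coeff_nonneg (n i : ℕ) : 0 ≤ (secPoly n).coeff i := by
  induction n generalizing i with
  | zero => rw [secPoly, coeff_one]; split_ifs <;> norm_num
  | succ n ih =>
    have h_one_add_X_sq : ∀ j, 0 ≤ ((1 : ℝ[X]) + X ^ 2).coeff j := fun j => by
      rw [coeff_add, coeff_one, coeff_X_pow]; split_ifs <;> norm_num
    have hX : ∀ j, 0 ≤ (X : ℝ[X]).coeff j := fun j => by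
      rw [coeff_X]; split_ifs <;> norm_num
    rw [secPoly, coeff_add]
    exact add_nonneg (coeff_mul_nonneg h_one_add_X_sq (coeff_derivative_nonneg ih) i)
      (coeff_mul_nonneg hX ih i)

theorem secPoly_coeff_zero_add_two (n : ℕ) :
    (secPoly (n + 2)).coeff 0 = (secPoly n).coeff 0 + 2 * (secPoly n).coeff 2 := by
  have hzero : (secPoly (n + 2)).coeff 0 = (secPoly (n + 1)).coeff 1 := by
    rw [secPoly]
    simp [coeff_derivative]
  have hone : (secPoly (n + 1)).coeff 1 = (secPoly n).coeff 0 + 2 * (secPoly n).coeff 2 := by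
    rw [secPoly, coeff_add, add_mul, one_mul, coeff_add, coeff_X_pow_mul', coeff_X_mul,
      coeff_derivative]
    norm_num
    ring
  rw [hzero, hone]

theorem five_le_secPoly_coeff_zero {m : ℕ} (hm : 2 ≤ m) : 5 ≤ (secPoly (2 * m)).coeff 0 := by
  induction m, hm using Nat.le_induction with
  | base => norm_num [secPoly, coeff_one, coeff_X]
  | succ m _ ih =>
    rw [mul_add_one, secPoly_coeff_zero_add_two]
    linarith [secPoly_coeff_nonneg (2 * m) 2]

theorem hasDerivAt_inv_cos_mul_eval_tan (p : ℝ[X]) {x : ℝ} (hx : cos x ≠ 0) :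
    HasDerivAt (fun y => (cos y)⁻¹ * p.eval (tan y))
      ((cos x)⁻¹ * ((1 + X ^ 2) * derivative p + X * p).eval (tan x)) x := by
  have hsec := (hasDerivAt_cos x).inv hx
  have hpt := (p.hasDerivAt (tan x)).comp x (hasDerivAt_tan hx)
  refine (hsec.mul hpt).congr_deriv ?_
  have hsec_sq : 1 / cos x ^ 2 = 1 + tan x ^ 2 := by
    rw [one_div, ← inv_one_add_tan_sq hx, inv_inv]
  have hsin : sin x / cos x ^ 2 = (cos x)⁻¹ * tan x := by
    rw [tan_eq_sin_div_cos]; ring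
  simp only [Pi.inv_apply, Function.comp_apply, eval_add, eval_mul, eval_pow, eval_one, eval_X,
    neg_neg, hsec_sq, hsin]
  ring

theorem iteratedDeriv_inv_cos (n : ℕ) {x : ℝ} (hx : cos x ≠ 0) :
    iteratedDeriv n (fun y => (cos y)⁻¹) x = (cos x)⁻¹ * (secPoly n).eval (tan x) := by
  induction n generalizing x with
  | zero => simp [secPoly]
  | succ n ih =>
    have hnear : iteratedDeriv n (fun y => (cos y)⁻¹) =ᶠ[𝓝 x]
        fun y => (cos y)⁻¹ * (secPoly n).eval (tan y) :=
      Filter.eventually_of_mem ((isOpen_ne_fun continuous_cos continuous_const).mem_nhds hx)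
        fun y hy => ih hy
    rw [iteratedDeriv_succ, hnear.deriv_eq, (hasDerivAt_inv_cos_mul_eval_tan _ hx).deriv, secPoly]

theorem two_mul_iteratedDeriv_cos_zero_le {n : ℕ} (hn : n ≠ 0) :
    2 * iteratedDeriv n cos 0 ≤ (secPoly n).coeff 0 := by
  obtain ⟨m, rfl | rfl⟩ := n.even_or_odd'
  · simp only [iteratedDeriv_even_cos, Pi.mul_apply, Pi.pow_apply, Pi.neg_apply, Pi.one_apply,
      cos_zero, mul_one]
    obtain rfl | hm : m = 1 ∨ 2 ≤ m := by omega
    · linarith [secPoly_coeff_nonneg 2 0]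
    · rcases neg_one_pow_eq_or ℝ m with h | h <;> rw [h] <;>
        linarith [five_le_secPoly_coeff_zero hm]
  · simp only [iteratedDeriv_odd_cos, Pi.mul_apply, sin_zero, mul_zero]
    exact secPoly_coeff_nonneg _ 0

noncomputable def G (y : ℝ) : ℝ := 1 + 1 / cos y - 2 * cos y

theorem contDiffAt_G {n : ℕ∞} {y : ℝ} (hy : cos y ≠ 0) : ContDiffAt ℝ n G y := by
  unfold G; fun_prop (disch := exact hy)

theorem iteratedDeriv_F_zero (n : ℕ) : iteratedDeriv n F 0 = 2⁻¹ ^ n * iteratedDeriv n G 0 := by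
  have hF : F = fun x => G (2⁻¹ * x) := by
    funext x; rw [F, G, inv_mul_eq_div]
  have hcos : ∀ y ∈ Ioo (-(π / 2)) (π / 2), cos y ≠ 0 := fun y hy => (cos_pos_of_mem_Ioo hy).ne'
  have hmaps : MapsTo (2⁻¹ * ·) (Ioo (-(π / 2)) (π / 2)) (Ioo (-(π / 2)) (π / 2)) :=
    fun y ⟨h₁, h₂⟩ => ⟨by linarith [pi_pos], by linarith [pi_pos]⟩
  rw [hF, iteratedDeriv_comp_const_mul_of_contDiffOn isOpen_Ioo
    (fun y hy => (contDiffAt_G (hcos y hy)).contDiffWithinAt) hmaps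
    ⟨by linarith [pi_pos], by linarith [pi_pos]⟩, mul_zero]

theorem iteratedDeriv_succ_G_zero (n : ℕ) :
    iteratedDeriv (n + 1) G 0 = (secPoly (n + 1)).coeff 0 - 2 * iteratedDeriv (n + 1) cos 0 := by
  have hcos : cos 0 ≠ 0 := by simp
  unfold G
  rw [iteratedDeriv_fun_sub (by fun_prop (disch := exact hcos)) (by fun_prop),
    iteratedDeriv_const_add n.succ_pos, iteratedDeriv_const_mul_field]
  simp only [one_div]
  rw [iteratedDeriv_inv_cos _ hcos, cos_zero, tan_zero, coeff_zero_eq_eval_zero, inv_one, one_mul]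

theorem iteratedDeriv_G_zero_nonneg (n : ℕ) : 0 ≤ iteratedDeriv n G 0 := by
  cases n with
  | zero => norm_num [G]
  | succ n =>
    rw [iteratedDeriv_succ_G_zero]
    linarith [two_mul_iteratedDeriv_cos_zero_le n.succ_ne_zero]

theorem F_iterated_deriv_nonneg :
    (∀ k : ℕ, 0 ≤ iteratedDeriv k F 0) ∧
    F 0 = 0 ∧ deriv F 0 = 0 ∧ 0 < iteratedDeriv 2 F 0 := by
  refine ⟨fun k => ?_, by norm_num [F], ?_, ?_⟩
  · rw [iteratedDeriv_F_zero]
    exact mul_nonneg (by positivity) (iteratedDeriv_G_zero_nonneg k)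
  · rw [← iteratedDeriv_one, iteratedDeriv_F_zero, iteratedDeriv_succ_G_zero]
    simp [secPoly]
  · rw [iteratedDeriv_F_zero, iteratedDeriv_succ_G_zero]
    norm_num [secPoly]
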